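/- If the annealed field is non-trapping, i.e. π̃(x_0) < 1 for some x_0, then there exists A ⊆ S such that (i) A is transient for x_0 and (ii) Σ_{x ∈ S∖A} g(x_0,x) q(x) < ∞. -/

import Mathlib

open MeasureTheory ENNReal Classical

structure MC (S : Type*) [MeasurableSpace S] where
  p : S → S → ℝ≥0∞
  P : S → Measure (ℕ → S)
  prob : ∀ x, IsProbabilityMeasure (P x)
  start : ∀ x, P x {ω | ω 0 = x} = 1
  markov : ∀ x n (y : ℕ → S),
    P x {ω | ∀ i ≤ n + 1, ω i = y i}
      = P x {ω | ∀ i ≤ n, ω i = y i} * p (y n) (y (n + 1))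

/-- The Green's function `g (x, y) = ∑_{n ≥ 0} P_x (X_n = y)`. -/
noncomputable def MC.green {S : Type*} [MeasurableSpace S] (c : MC S) (x y : S) : ℝ≥0∞ :=
  ∑' n : ℕ, c.P x {ω | ω n = y}

/-- The annealed trapping probability
`π̃ (x) = P_x (X_n ∈ T_n for some n) = E_x [1 - ∏_{i=0}^∞ (1 - q (X_i))]`. -/
noncomputable def pitilde {S : Type*} [MeasurableSpace S] (c : MC S) (q : S → ℝ)
    (x : S) : ℝ≥0∞ :=
  ∫⁻ ω, (1 - ⨅ n : ℕ, ∏ i ∈ Finset.range (n + 1), ENNReal.ofReal (1 - q (ω i))) ∂ c.P x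

set_option linter.unusedSectionVars false
set_option linter.unusedVariables false

section aux

variable {S : Type*} [MeasurableSpace S] [MeasurableSingletonClass S] [Countable S]

lemma measAll (s : Set S) : MeasurableSet s := s.to_countable.measurableSet

/-- the shift -/
def shf (n : ℕ) (ω : ℕ → S) : ℕ → S := fun k => ω (n + k)

lemma measurable_shf (n : ℕ) : Measurable (shf (S := S) n) :=
  measurable_pi_lambda _ fun k => measurable_pi_apply _

/-- point cylinders -/
def cyl (n : ℕ) (y : ℕ → S) : Set (ℕ → S) := {ω | ∀ i ≤ n, ω i = y i}

lemma measurableSet_cyl (n : ℕ) (y : ℕ → S) : MeasurableSet (cyl n y) := by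
  have h : cyl n y = ⋂ i ∈ {i : ℕ | i ≤ n}, (fun ω : ℕ → S => ω i) ⁻¹' {y i} := by
    ext ω; simp [cyl]
  rw [h]
  exact MeasurableSet.biInter (Set.to_countable _)
    (fun i _ => (measurable_pi_apply i) (measAll _))

def cylSys (S : Type*) : Set (Set (ℕ → S)) := {C | ∃ n y, C = cyl n y}

lemma isPiSystem_cyl : IsPiSystem (cylSys S) := by
  rintro _ ⟨n, y, rfl⟩ _ ⟨m, z, rfl⟩ ⟨ω, hω1, hω2⟩
  rcases le_total n m with h | h
  · refine ⟨m, z, ?_⟩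
    apply Set.eq_of_subset_of_subset Set.inter_subset_right
    intro ω' hω'
    refine ⟨fun i hi => ?_, hω'⟩
    rw [hω' i (hi.trans h), ← hω2 i (hi.trans h), hω1 i hi]
  · refine ⟨n, y, ?_⟩
    apply Set.eq_of_subset_of_subset Set.inter_subset_left
    intro ω' hω'
    refine ⟨hω', fun i hi => ?_⟩
    rw [hω' i (hi.trans h), ← hω1 i (hi.trans h), hω2 i hi]

variable [Nonempty S]

/-- extension of a finite word to ℕ → S -/
noncomputable def extw (n : ℕ) (g : Fin (n+1) → S) : ℕ → S :=
  fun i => if h : i < n + 1 then g ⟨i, h⟩ else Classical.arbitrary S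

lemma pi_eq : (inferInstance : MeasurableSpace (ℕ → S))
    = MeasurableSpace.generateFrom (cylSys S) := by
  apply le_antisymm
  · rw [show (inferInstance : MeasurableSpace (ℕ → S)) = MeasurableSpace.pi from rfl,
      MeasurableSpace.pi]
    refine iSup_le fun k => ?_
    intro t ht
    obtain ⟨s, -, rfl⟩ := ht
    have h : (fun ω : ℕ → S => ω k) ⁻¹' s =
        ⋃ (g : {g : Fin (k+1) → S // g ⟨k, Nat.lt_succ_self k⟩ ∈ s}),
          cyl k (extw k g.1) := by
      ext ω
      constructor
      · intro hω
        refine Set.mem_iUnion.2 ⟨⟨fun i => ω i.1, hω⟩, fun i hi => ?_⟩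
        simp [extw, Nat.lt_succ_of_le hi]
      · intro hω
        obtain ⟨g, hg⟩ := Set.mem_iUnion.1 hω
        have h2 := hg k le_rfl
        show ω k ∈ s
        rw [h2]
        simpa [extw] using g.2
    rw [h]
    exact MeasurableSet.iUnion fun g =>
      MeasurableSpace.measurableSet_generateFrom ⟨k, extw k g.1, rfl⟩
  · exact MeasurableSpace.generateFrom_le (by rintro _ ⟨n, y, rfl⟩; exact measurableSet_cyl n y)

end aux

section mc

variable {S : Type*} [MeasurableSpace S] [MeasurableSingletonClass S] [Countable S]

lemma cylP (c : MC S) (x : S) : ∀ (n : ℕ) (y : ℕ → S),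
    c.P x (cyl n y)
      = (if y 0 = x then 1 else 0) * ∏ i ∈ Finset.range n, c.p (y i) (y (i+1)) := by
  intro n
  induction n with
  | zero =>
    intro y
    have h : cyl 0 y = {ω : ℕ → S | ω 0 = y 0} := by
      ext ω; simp [cyl, Nat.le_zero]
    rw [h]
    simp only [Finset.range_zero, Finset.prod_empty, mul_one]
    haveI := c.prob x
    by_cases hxy : y 0 = x
    · rw [if_pos hxy, show {ω : ℕ → S | ω 0 = y 0} = {ω : ℕ → S | ω 0 = x} by rw [hxy]]
      exact c.start x
    · rw [if_neg hxy]
      have hm : MeasurableSet {ω : ℕ → S | ω 0 = x} := by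
        have hme : Measurable (fun ω : ℕ → S => ω 0) := measurable_pi_apply 0
        exact hme (measAll {x})
      have h0 : c.P x {ω : ℕ → S | ω 0 = x}ᶜ = 0 := by
        rw [measure_compl hm (measure_ne_top _ _), c.start x, measure_univ]
        simp
      refine measure_mono_null ?_ h0
      intro ω hω hx
      exact hxy ((Set.mem_setOf_eq ▸ hω) ▸ hx ▸ rfl)
  | succ n ih =>
    intro y
    have h1 : cyl (n+1) y = {ω : ℕ → S | ∀ i ≤ n + 1, ω i = y i} := rfl
    have h2 : cyl n y = {ω : ℕ → S | ∀ i ≤ n, ω i = y i} := rfl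
    rw [h1, c.markov x n y, ← h2, ih y, Finset.prod_range_succ, mul_assoc]

variable [Nonempty S]

lemma markov_cyl (c : MC S) (x : S) (n : ℕ) (y : ℕ → S) {B : Set (ℕ → S)}
    (hB : MeasurableSet B) :
    c.P x (cyl n y ∩ shf n ⁻¹' B) = c.P x (cyl n y) * c.P (y n) B := by
  haveI := c.prob x
  haveI := c.prob (y n)
  have key : ((c.P x).restrict (cyl n y)).map (shf n) = (c.P x (cyl n y)) • c.P (y n) := by
    haveI : IsFiniteMeasure (((c.P x).restrict (cyl n y)).map (shf n)) := by
      apply Measure.isFiniteMeasure_map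
    apply ext_of_generate_finite _ pi_eq isPiSystem_cyl
    · rintro _ ⟨m, z, rfl⟩
      rw [Measure.map_apply (measurable_shf n) (measurableSet_cyl m z),
        Measure.restrict_apply ((measurable_shf n) (measurableSet_cyl m z)),
        Measure.smul_apply, smul_eq_mul]
      by_cases hzy : z 0 = y n
      · set w : ℕ → S := fun i => if i ≤ n then y i else z (i - n) with hw
        have hset : shf n ⁻¹' cyl m z ∩ cyl n y = cyl (n + m) w := by
          ext ω
          constructor
          · rintro ⟨h1, h2⟩
            have h1' : ∀ j ≤ m, ω (n + j) = z j := fun j hj => h1 j hj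
            intro i hi
            by_cases hin : i ≤ n
            · rw [h2 i hin, hw]; simp [hin]
            · have hi' : i - n ≤ m := by omega
              have : ω i = ω (n + (i - n)) := by congr 1; omega
              rw [this, h1' (i - n) hi', hw]
              simp [hin]
          · intro h
            constructor
            · intro j hj
              show ω (n + j) = z j
              have h3 : ω (n + j) = w (n + j) := h (n + j) (by omega)
              rw [h3, hw]
              by_cases hj0 : n + j ≤ n
              · have hj' : j = 0 := by omega
                simp [hj', hj0, ← hzy]
              · simp only [hj0, if_false]
                congr 1; omega
            · intro i hi
              rw [h i (by omega), hw]; simp [hi]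
        rw [hset, cylP c x, cylP c x, cylP c (y n), if_pos hzy]
        have hw0 : w 0 = y 0 := by simp [hw]
        rw [hw0]
        rw [Finset.prod_range_add]
        have hp1 : ∀ i ∈ Finset.range n, c.p (w i) (w (i+1)) = c.p (y i) (y (i+1)) := by
          intro i hi
          have hi' : i < n := Finset.mem_range.1 hi
          have e1 : w i = y i := by simp [hw, hi'.le]
          have hii : i + 1 ≤ n := hi'
          have e2 : w (i+1) = y (i+1) := by simp [hw, hii]
          rw [e1, e2]
        have hp2 : ∀ j ∈ Finset.range m, c.p (w (n + j)) (w (n + j + 1)) = c.p (z j) (z (j+1)) := by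
          intro j hj
          have e1 : w (n + j) = z j := by
            by_cases hj0 : n + j ≤ n
            · have : j = 0 := by omega
              simp [hw, this, hzy]
            · simp only [hw, hj0, if_false]
              congr 1; omega
          have e2 : w (n + j + 1) = z (j + 1) := by
            have hj0 : ¬ (n + j + 1 ≤ n) := by omega
            simp only [hw, hj0, if_false]
            congr 1; omega
          rw [e1, e2]
        rw [Finset.prod_congr rfl hp1, Finset.prod_congr rfl hp2]
        ring
      · have hset : shf n ⁻¹' cyl m z ∩ cyl n y = ∅ := by
          ext ω
          simp only [Set.mem_inter_iff, Set.mem_empty_iff_false, iff_false, not_and]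
          intro h1 h2
          apply hzy
          have h1' : ω (n + 0) = z 0 := h1 0 (Nat.zero_le m)
          rw [← h1']
          show ω n = y n
          exact h2 n le_rfl
        rw [hset, measure_empty, cylP c (y n) m z, if_neg hzy, zero_mul, mul_zero]
    · rw [Measure.map_apply (measurable_shf n) MeasurableSet.univ, Set.preimage_univ,
        Measure.restrict_apply MeasurableSet.univ, Set.univ_inter, Measure.smul_apply,
        smul_eq_mul, measure_univ, mul_one]
  have := congrArg (fun μ : Measure (ℕ → S) => μ B) key
  simp only [Measure.map_apply (measurable_shf n) hB,
    Measure.restrict_apply ((measurable_shf n) hB), Measure.smul_apply, smul_eq_mul] at this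
  rw [Set.inter_comm]
  exact this

lemma markov_event (c : MC S) (x₀ x : S) (n : ℕ) (Q : (ℕ → S) → Prop)
    (hQ : ∀ ω ω', (∀ i ≤ n, ω i = ω' i) → Q ω → Q ω')
    (hx : ∀ ω, Q ω → ω n = x) {B : Set (ℕ → S)} (hB : MeasurableSet B) :
    c.P x₀ ({ω | Q ω} ∩ shf n ⁻¹' B) = c.P x₀ {ω | Q ω} * c.P x B := by
  set I := {g : Fin (n+1) → S // Q (extw n g)} with hI
  have hU : {ω | Q ω} = ⋃ (g : I), cyl n (extw n g.1) := by
    ext ω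
    constructor
    · intro hω
      have hagree : ∀ i ≤ n, ω i = extw n (fun i : Fin (n+1) => ω i.1) i := by
        intro i hi
        simp [extw, Nat.lt_succ_of_le hi]
      refine Set.mem_iUnion.2 ⟨⟨fun i : Fin (n+1) => ω i.1, hQ ω _ hagree hω⟩, hagree⟩
    · intro hω
      obtain ⟨g, hg⟩ := Set.mem_iUnion.1 hω
      exact hQ (extw n g.1) ω (fun i hi => (hg i hi).symm) g.2
  have hdisj : Pairwise (Function.onFun Disjoint fun g : I => cyl n (extw n g.1)) := by
    intro g g' hne
    refine Set.disjoint_left.2 fun ω hω hω' => ?_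
    apply hne
    apply Subtype.ext
    funext i
    have e1 := hω i.1 (Nat.lt_succ_iff.1 i.2)
    have e2 := hω' i.1 (Nat.lt_succ_iff.1 i.2)
    have : extw n g.1 i.1 = extw n g'.1 i.1 := by rw [← e1, e2]
    simpa [extw, i.2] using this
  have hlast : ∀ g : I, extw n g.1 n = x := fun g => hx _ g.2
  rw [hU, Set.iUnion_inter]
  rw [measure_iUnion (fun g g' hne => Set.disjoint_left.2 fun ω hω hω' =>
        Set.disjoint_left.1 (hdisj hne) hω.1 hω'.1)
      (fun g => ((measurableSet_cyl n _).inter ((measurable_shf n) hB)))]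
  rw [measure_iUnion hdisj (fun g => measurableSet_cyl n _)]
  calc ∑' g : I, c.P x₀ (cyl n (extw n g.1) ∩ shf n ⁻¹' B)
      = ∑' g : I, c.P x₀ (cyl n (extw n g.1)) * c.P x B := by
        refine tsum_congr fun g => ?_
        rw [markov_cyl c x₀ n (extw n g.1) hB, hlast g]
    _ = (∑' g : I, c.P x₀ (cyl n (extw n g.1))) * c.P x B := ENNReal.tsum_mul_right

end mc

section analytic

lemma Pi_zero_of_Ytop {S : Type*} (q : S → ℝ) (hq : ∀ s, 0 ≤ q s ∧ q s < 1) (ω : ℕ → S)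
    (hY : (∑' k, ENNReal.ofReal (q (ω k))) = ⊤) :
    (⨅ n : ℕ, ∏ i ∈ Finset.range (n + 1), ENNReal.ofReal (1 - q (ω i))) = 0 := by
  by_contra hne
  set Pi := ⨅ n : ℕ, ∏ i ∈ Finset.range (n + 1), ENNReal.ofReal (1 - q (ω i)) with hPi
  have hPile1 : Pi ≤ 1 := by
    refine (iInf_le _ 0).trans ?_
    rw [show (0:ℕ) + 1 = 1 from rfl, Finset.prod_range_one]
    exact ENNReal.ofReal_le_one.2 (by linarith [(hq (ω 0)).1])
  have hPtop : Pi ≠ ⊤ := (hPile1.trans_lt ENNReal.one_lt_top).ne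
  set r := Pi.toReal with hr
  have hrpos : 0 < r := ENNReal.toReal_pos hne hPtop
  have hrle1 : r ≤ 1 := by
    rw [hr]
    exact ENNReal.toReal_le_of_le_ofReal zero_le_one (by rw [ENNReal.ofReal_one]; exact hPile1)
  have hbound : ∀ m, (∑ i ∈ Finset.range (m + 1), q (ω i)) ≤ -Real.log r := by
    intro m
    have h1 : Pi ≤ ∏ i ∈ Finset.range (m + 1), ENNReal.ofReal (1 - q (ω i)) := iInf_le _ m
    have h2 : (∏ i ∈ Finset.range (m + 1), ENNReal.ofReal (1 - q (ω i)))
        = ENNReal.ofReal (∏ i ∈ Finset.range (m + 1), (1 - q (ω i))) :=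
      (ENNReal.ofReal_prod_of_nonneg (fun i _ => by linarith [(hq (ω i)).2])).symm
    have h3 : (∏ i ∈ Finset.range (m + 1), (1 - q (ω i)))
        ≤ Real.exp (-(∑ i ∈ Finset.range (m + 1), q (ω i))) := by
      rw [← Finset.sum_neg_distrib, Real.exp_sum]
      refine Finset.prod_le_prod (fun i _ => by linarith [(hq (ω i)).2]) (fun i _ => ?_)
      have := Real.add_one_le_exp (-(q (ω i)))
      linarith
    have h4 : Pi ≤ ENNReal.ofReal (Real.exp (-(∑ i ∈ Finset.range (m + 1), q (ω i)))) := by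
      rw [h2] at h1
      exact h1.trans (ENNReal.ofReal_le_ofReal h3)
    have h5 : r ≤ Real.exp (-(∑ i ∈ Finset.range (m + 1), q (ω i))) :=
      ENNReal.toReal_le_of_le_ofReal (Real.exp_nonneg _) h4
    have h6 : Real.log r ≤ -(∑ i ∈ Finset.range (m + 1), q (ω i)) := by
      have h7 := Real.log_le_log hrpos h5
      rwa [Real.log_exp] at h7
    linarith
  have hbound' : ∀ m, (∑ i ∈ Finset.range m, ENNReal.ofReal (q (ω i)))
      ≤ ENNReal.ofReal (-Real.log r) := by
    intro m
    rw [← ENNReal.ofReal_sum_of_nonneg (fun i _ => (hq (ω i)).1)]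
    apply ENNReal.ofReal_le_ofReal
    cases m with
    | zero =>
      simp only [Finset.range_zero, Finset.sum_empty]
      exact neg_nonneg.2 (Real.log_nonpos (le_of_lt hrpos) hrle1)
    | succ m => exact hbound m
  have hfin : (∑' k, ENNReal.ofReal (q (ω k))) ≤ ENNReal.ofReal (-Real.log r) := by
    rw [ENNReal.tsum_eq_iSup_nat]
    exact iSup_le hbound'
  rw [hY] at hfin
  exact ENNReal.ofReal_ne_top (top_le_iff.1 hfin)

end analytic

set_option maxHeartbeats 1000000 in
/-- Theorem 2: If the annealed field is non-trapping, i.e.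
`π̃ (x₀) < 1` for some `x₀`, then there exists `A ⊆ S` such that (i) `A` is transient
for `x₀` (i.e. `P_{x₀} (∃ n, X_n ∈ A) < 1`) and (ii) `∑_{x ∈ S ∖ A} g (x₀, x) q (x) < ∞`. -/
theorem nontrapping_gives_transient_set
    {S : Type*} [MeasurableSpace S] [MeasurableSingletonClass S] [Countable S]
    (c : MC S) (q : S → ℝ) (hq : ∀ s, 0 ≤ q s ∧ q s < 1)
    (x₀ : S) (hx₀ : pitilde c q x₀ < 1) :
    ∃ A : Set S,
      c.P x₀ {ω | ∃ n, ω n ∈ A} < 1 ∧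
      (∑' x : S, if x ∈ A then 0 else c.green x₀ x * ENNReal.ofReal (q x)) < ⊤ := by
  classical
  haveI : Nonempty S := ⟨x₀⟩
  haveI := c.prob x₀
  set qe : S → ℝ≥0∞ := fun s => ENNReal.ofReal (q s) with hqe
  set Y : (ℕ → S) → ℝ≥0∞ := fun ω => ∑' k, qe (ω k) with hYdef
  have hYmeas : Measurable Y := Measurable.ennreal_tsum fun k =>
    (measurable_of_countable qe).comp (measurable_pi_apply k)
  have htail : ∀ (ω : ℕ → S) (n : ℕ), Y (shf n ω) ≤ Y ω := by
    intro ω n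
    have h : Y (shf n ω) = ∑' k, qe (ω (n + k)) := rfl
    rw [h]
    exact ENNReal.tsum_comp_le_tsum_of_injective (add_right_injective n) (fun k => qe (ω k))
  have htail2 : ∀ (ω : ℕ → S) (T k : ℕ), Y (shf (T + k) ω) ≤ Y (shf T ω) := by
    intro ω T k
    have h : shf (T + k) ω = shf k (shf T ω) := by
      funext j
      show ω (T + k + j) = ω (T + (k + j))
      congr 1
      omega
    rw [h]
    exact htail (shf T ω) k
  -- positive probability of finite total weight
  have hYtopmeas : MeasurableSet {ω : ℕ → S | Y ω = ⊤} := hYmeas (measurableSet_singleton ⊤)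
  have hPYtop : c.P x₀ {ω | Y ω = ⊤} < 1 := by
    have hind : ∀ ω : ℕ → S,
        Set.indicator {ω : ℕ → S | Y ω = ⊤} (fun _ => (1:ℝ≥0∞)) ω
          ≤ 1 - ⨅ n : ℕ, ∏ i ∈ Finset.range (n + 1), ENNReal.ofReal (1 - q (ω i)) := by
      intro ω
      by_cases hω : ω ∈ {ω : ℕ → S | Y ω = ⊤}
      · rw [Set.indicator_of_mem hω]
        rw [Pi_zero_of_Ytop q hq ω hω, tsub_zero]
      · rw [Set.indicator_of_notMem hω]
        exact zero_le
    have h1 : c.P x₀ {ω | Y ω = ⊤}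
        = ∫⁻ ω, Set.indicator {ω : ℕ → S | Y ω = ⊤} (fun _ => (1:ℝ≥0∞)) ω ∂ c.P x₀ := by
      rw [lintegral_indicator_const hYtopmeas, one_mul]
    rw [h1]
    exact lt_of_le_of_lt (lintegral_mono hind) hx₀
  have hPfin : 0 < c.P x₀ {ω | Y ω ≠ ⊤} := by
    have hc : c.P x₀ {ω | Y ω ≠ ⊤} = 1 - c.P x₀ {ω | Y ω = ⊤} := by
      have hcc : {ω : ℕ → S | Y ω ≠ ⊤} = {ω : ℕ → S | Y ω = ⊤}ᶜ := rfl
      rw [hcc, measure_compl hYtopmeas (measure_ne_top _ _), measure_univ]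
    rw [hc]
    exact tsub_pos_of_lt hPYtop
  obtain ⟨M, hM⟩ : ∃ M : ℕ, 0 < c.P x₀ {ω | Y ω ≤ (M : ℝ≥0∞)} := by
    by_contra hno
    push_neg at hno
    have hsub : {ω : ℕ → S | Y ω ≠ ⊤} ⊆ ⋃ M : ℕ, {ω : ℕ → S | Y ω ≤ (M : ℝ≥0∞)} := by
      intro ω hω
      obtain ⟨m, hm⟩ := ENNReal.exists_nat_gt hω
      exact Set.mem_iUnion.2 ⟨m, hm.le⟩
    have h0 : c.P x₀ {ω | Y ω ≠ ⊤} = 0 :=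
      measure_mono_null hsub (measure_iUnion_null fun m => le_antisymm (hno m) (zero_le))
    exact hPfin.ne' h0
  set G : Set (ℕ → S) := {ω | Y ω ≤ (M:ℝ≥0∞)} with hGdef
  have hGmeas : MeasurableSet G := hYmeas measurableSet_Iic
  set α := c.P x₀ G with hα
  have hα1 : α ≤ 1 := prob_le_one
  have hαtop : α ≠ ⊤ := (hα1.trans_lt ENNReal.one_lt_top).ne
  set δ := α / 2 with hδ
  have hδpos : 0 < δ := ENNReal.half_pos hM.ne'
  have hδtop : δ ≠ ⊤ := ((ENNReal.half_le_self.trans hα1).trans_lt ENNReal.one_lt_top).ne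
  set A : Set S := {x | c.P x G < δ} with hA
  have hAmem : ∀ x : S, x ∈ A ↔ c.P x G < δ := fun x => by rw [hA]; exact Iff.rfl
  clear_value A
  have hGsub : ∀ n, G ⊆ shf n ⁻¹' G := fun n ω hω => le_trans (htail ω n) hω
  refine ⟨A, ?_, ?_⟩
  · -- (i) transience of A
    set FE : ℕ → Set (ℕ → S) := fun n => {ω | ω n ∈ A ∧ ∀ i < n, ω i ∉ A} with hFE
    have hFEmeas : ∀ n, MeasurableSet (FE n) := by
      intro n
      have h : FE n = ((fun ω : ℕ → S => ω n) ⁻¹' A)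
          ∩ ⋂ i ∈ {i : ℕ | i < n}, ((fun ω : ℕ → S => ω i) ⁻¹' Aᶜ) := by
        ext ω; simp [hFE]
      rw [h]
      exact ((measurable_pi_apply n) (measAll A)).inter
        (MeasurableSet.biInter (Set.to_countable _)
          fun i _ => (measurable_pi_apply i) (measAll _))
    have hhit : {ω : ℕ → S | ∃ n, ω n ∈ A} = ⋃ n, FE n := by
      ext ω
      constructor
      · intro hω
        exact Set.mem_iUnion.2 ⟨Nat.find hω, Nat.find_spec hω, fun i hi => Nat.find_min hω hi⟩
      · intro hω
        obtain ⟨n, hn, -⟩ := Set.mem_iUnion.1 hω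
        exact ⟨n, hn⟩
    have hFEdisj : Pairwise (Function.onFun Disjoint FE) := by
      intro n m hnm
      rcases hnm.lt_or_gt with h | h
      · exact Set.disjoint_left.2 fun ω hω hω' => (hω'.2 n h) hω.1
      · exact Set.disjoint_left.2 fun ω hω hω' => (hω.2 m h) hω'.1
    have hkey : ∀ n, c.P x₀ (FE n ∩ shf n ⁻¹' G) ≤ δ * c.P x₀ (FE n) := by
      intro n
      set E : A → Set (ℕ → S) := fun a => {ω | ω n = a.1 ∧ ∀ i < n, ω i ∉ A} with hE
      have hFEU : FE n = ⋃ a : A, E a := by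
        ext ω
        constructor
        · rintro ⟨h1, h2⟩
          exact Set.mem_iUnion.2 ⟨⟨ω n, h1⟩, rfl, h2⟩
        · intro hω
          obtain ⟨a, ha⟩ := Set.mem_iUnion.1 hω
          exact ⟨ha.1 ▸ a.2, ha.2⟩
      have hEmeas : ∀ a : A, MeasurableSet (E a) := by
        intro a
        have h : E a = ((fun ω : ℕ → S => ω n) ⁻¹' {a.1})
            ∩ ⋂ i ∈ {i : ℕ | i < n}, ((fun ω : ℕ → S => ω i) ⁻¹' Aᶜ) := by
          ext ω; simp [hE]
        rw [h]
        exact ((measurable_pi_apply n) (measAll _)).inter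
          (MeasurableSet.biInter (Set.to_countable _)
            fun i _ => (measurable_pi_apply i) (measAll _))
      have hEdisj : Pairwise (Function.onFun Disjoint E) := by
        intro a a' hne
        refine Set.disjoint_left.2 fun ω hω hω' => hne (Subtype.ext ?_)
        rw [← hω.1, ← hω'.1]
      have hmark : ∀ a : A, c.P x₀ (E a ∩ shf n ⁻¹' G) = c.P x₀ (E a) * c.P a.1 G := by
        intro a
        exact markov_event c x₀ a.1 n (fun ω => ω n = a.1 ∧ ∀ i < n, ω i ∉ A)
          (fun ω ω' hagree h => ⟨by rw [← hagree n le_rfl]; exact h.1,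
            fun i hi => by rw [← hagree i hi.le]; exact h.2 i hi⟩)
          (fun ω h => h.1) hGmeas
      calc c.P x₀ (FE n ∩ shf n ⁻¹' G)
          = ∑' a : A, c.P x₀ (E a ∩ shf n ⁻¹' G) := by
            rw [hFEU, Set.iUnion_inter]
            exact measure_iUnion
              (fun a a' hne => Set.disjoint_left.2 fun ω hω hω' =>
                Set.disjoint_left.1 (hEdisj hne) hω.1 hω'.1)
              (fun a => (hEmeas a).inter ((measurable_shf n) hGmeas))
        _ = ∑' a : A, c.P x₀ (E a) * c.P a.1 G := tsum_congr hmark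
        _ ≤ ∑' a : A, c.P x₀ (E a) * δ :=
            Summable.tsum_le_tsum (fun a => mul_le_mul_right (le_of_lt ((hAmem a.1).1 a.2)) _)
              ENNReal.summable ENNReal.summable
        _ = (∑' a : A, c.P x₀ (E a)) * δ := ENNReal.tsum_mul_right
        _ = c.P x₀ (FE n) * δ := by rw [hFEU, measure_iUnion hEdisj hEmeas]
        _ = δ * c.P x₀ (FE n) := mul_comm _ _
    have hhitG : c.P x₀ ({ω | ∃ n, ω n ∈ A} ∩ G) ≤ δ := by
      calc c.P x₀ ({ω | ∃ n, ω n ∈ A} ∩ G) = c.P x₀ (⋃ n, FE n ∩ G) := by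
            rw [hhit, Set.iUnion_inter]
        _ ≤ ∑' n, c.P x₀ (FE n ∩ G) := measure_iUnion_le _
        _ ≤ ∑' n, c.P x₀ (FE n ∩ shf n ⁻¹' G) :=
            Summable.tsum_le_tsum (fun n => measure_mono
              (Set.inter_subset_inter_right _ (hGsub n))) ENNReal.summable ENNReal.summable
        _ ≤ ∑' n, δ * c.P x₀ (FE n) := Summable.tsum_le_tsum hkey ENNReal.summable ENNReal.summable
        _ = δ * ∑' n, c.P x₀ (FE n) := ENNReal.tsum_mul_left
        _ = δ * c.P x₀ (⋃ n, FE n) := by rw [measure_iUnion hFEdisj hFEmeas]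
        _ ≤ δ * 1 := mul_le_mul_right prob_le_one _
        _ = δ := mul_one δ
    have hsplit : c.P x₀ {ω | ∃ n, ω n ∈ A} ≤ (1 - α) + δ := by
      have hsub : {ω : ℕ → S | ∃ n, ω n ∈ A} ⊆ Gᶜ ∪ ({ω | ∃ n, ω n ∈ A} ∩ G) := by
        intro ω hω
        by_cases hωG : ω ∈ G
        · exact Or.inr ⟨hω, hωG⟩
        · exact Or.inl hωG
      refine (measure_mono hsub).trans ((measure_union_le _ _).trans ?_)
      have hGc : c.P x₀ Gᶜ = 1 - α := by
        rw [measure_compl hGmeas (measure_ne_top _ _), measure_univ]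
      exact add_le_add hGc.le hhitG
    refine lt_of_le_of_lt hsplit ?_
    have h1αtop : (1 : ℝ≥0∞) - α ≠ ⊤ := (tsub_le_self.trans_lt ENNReal.one_lt_top).ne
    calc (1 - α) + δ < (1 - α) + α :=
          ENNReal.add_lt_add_left h1αtop (ENNReal.half_lt_self hM.ne' hαtop)
      _ = 1 := tsub_add_cancel_of_le hα1
  · -- (ii) summability
    set E2 : ℕ → S → Set (ℕ → S) := fun n x => {ω | ω n = x} ∩ shf n ⁻¹' G with hE2
    have hXnmeas : ∀ (n : ℕ) (x : S), MeasurableSet {ω : ℕ → S | ω n = x} := by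
      intro n x
      have h : {ω : ℕ → S | ω n = x} = (fun ω : ℕ → S => ω n) ⁻¹' {x} := rfl
      rw [h]
      exact (measurable_pi_apply n) (measAll ({x} : Set S))
    have hE2meas : ∀ (n : ℕ) (x : S), MeasurableSet (E2 n x) :=
      fun n x => (hXnmeas n x).inter ((measurable_shf n) hGmeas)
    have hmark2 : ∀ (n : ℕ) (x : S), c.P x₀ (E2 n x) = c.P x₀ {ω | ω n = x} * c.P x G := by
      intro n x
      exact markov_event c x₀ x n (fun ω => ω n = x)
        (fun ω ω' hagree h => by show ω' n = x; rw [← hagree n le_rfl]; exact h)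
        (fun ω h => h) hGmeas
    set s : ℕ → (ℕ → S) → ℝ≥0∞ := fun n => Set.indicator (shf n ⁻¹' G) (fun ω => qe (ω n))
      with hs
    have hsmeas : ∀ n, Measurable (s n) := fun n =>
      ((measurable_of_countable qe).comp (measurable_pi_apply n)).indicator
        ((measurable_shf n) hGmeas)
    have hpt : ∀ ω, (∑' n, s n ω) ≤ (M : ℝ≥0∞) := by
      intro ω
      by_cases hex : ∃ n, ω ∈ shf n ⁻¹' G
      · obtain ⟨T, hT, hTmin⟩ : ∃ T, ω ∈ shf T ⁻¹' G ∧ ∀ n < T, ω ∉ shf n ⁻¹' G :=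
          ⟨Nat.find hex, Nat.find_spec hex, fun n hn => Nat.find_min hex hn⟩
        have hzero : ∀ n < T, s n ω = 0 :=
          fun n hn => Set.indicator_of_notMem (hTmin n hn) _
        rw [ENNReal.tsum_eq_iSup_nat]
        refine iSup_le fun N => ?_
        have h1 : (∑ n ∈ Finset.range N, s n ω) = ∑ n ∈ Finset.Ico T N, s n ω := by
          refine (Finset.sum_subset ?_ ?_).symm
          · intro n hn
            exact Finset.mem_range.2 (Finset.mem_Ico.1 hn).2
          · intro n _ hn
            by_cases hnT : n < T
            · exact hzero n hnT
            · exact absurd (Finset.mem_Ico.2 ⟨not_lt.1 hnT, Finset.mem_range.1 ‹n ∈ Finset.range N›⟩) hn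
        rw [h1]
        calc (∑ n ∈ Finset.Ico T N, s n ω)
            ≤ ∑ n ∈ Finset.Ico T N, qe (ω n) :=
              Finset.sum_le_sum fun n _ => Set.indicator_le_self _ _ ω
          _ = ∑ k ∈ Finset.range (N - T), qe (ω (T + k)) := Finset.sum_Ico_eq_sum_range _ T N
          _ ≤ ∑' k, qe (ω (T + k)) := ENNReal.sum_le_tsum _
          _ = Y (shf T ω) := rfl
          _ ≤ (M:ℝ≥0∞) := hT
      · have hzero : ∀ n, s n ω = 0 :=
          fun n => Set.indicator_of_notMem (fun h => hex ⟨n, h⟩) _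
        simp [hzero]
    have hsint : ∀ n, ∫⁻ ω, s n ω ∂ c.P x₀ = ∑' x : S, qe x * c.P x₀ (E2 n x) := by
      intro n
      have hdecomp : ∀ ω, s n ω = ∑' x : S, Set.indicator (E2 n x) (fun _ => qe x) ω := by
        intro ω
        rw [tsum_eq_single (ω n) ?_]
        · by_cases hωG : ω ∈ shf n ⁻¹' G
          · rw [Set.indicator_of_mem (show ω ∈ E2 n (ω n) from ⟨rfl, hωG⟩)]
            exact Set.indicator_of_mem hωG _
          · rw [Set.indicator_of_notMem (show ω ∉ E2 n (ω n) from fun h => hωG h.2)]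
            exact Set.indicator_of_notMem hωG _
        · intro x hx
          exact Set.indicator_of_notMem (fun h => hx h.1.symm) _
      calc ∫⁻ ω, s n ω ∂ c.P x₀
          = ∫⁻ ω, ∑' x : S, Set.indicator (E2 n x) (fun _ => qe x) ω ∂ c.P x₀ :=
            lintegral_congr hdecomp
        _ = ∑' x : S, ∫⁻ ω, Set.indicator (E2 n x) (fun _ => qe x) ω ∂ c.P x₀ :=
            lintegral_tsum fun x => (measurable_const.indicator (hE2meas n x)).aemeasurable
        _ = ∑' x : S, qe x * c.P x₀ (E2 n x) := by
            refine tsum_congr fun x => ?_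
            rw [lintegral_indicator_const (hE2meas n x)]
    have hRsum : (∑' x : S, ∑' n, qe x * c.P x₀ (E2 n x)) ≤ (M:ℝ≥0∞) := by
      rw [ENNReal.tsum_comm]
      calc (∑' n, ∑' x : S, qe x * c.P x₀ (E2 n x))
          = ∑' n, ∫⁻ ω, s n ω ∂ c.P x₀ := tsum_congr fun n => (hsint n).symm
        _ = ∫⁻ ω, ∑' n, s n ω ∂ c.P x₀ :=
            (lintegral_tsum fun n => (hsmeas n).aemeasurable).symm
        _ ≤ ∫⁻ _, (M:ℝ≥0∞) ∂ c.P x₀ := lintegral_mono hpt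
        _ = (M:ℝ≥0∞) := by rw [lintegral_const, measure_univ, mul_one]
    have hterm : ∀ x : S, (if x ∈ A then 0 else c.green x₀ x * ENNReal.ofReal (q x))
        ≤ δ⁻¹ * ∑' n, qe x * c.P x₀ (E2 n x) := by
      intro x
      by_cases hxA : x ∈ A
      · rw [if_pos hxA]; exact zero_le
      · rw [if_neg hxA]
        show c.green x₀ x * qe x ≤ _
        have hxδ : δ ≤ c.P x G := not_lt.1 (fun h => hxA ((hAmem x).2 h))
        have h2 : c.green x₀ x * qe x = ∑' n, c.P x₀ {ω | ω n = x} * qe x := by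
          rw [MC.green, ENNReal.tsum_mul_right]
        rw [h2, ← ENNReal.tsum_mul_left]
        refine Summable.tsum_le_tsum (fun n => ?_) ENNReal.summable ENNReal.summable
        rw [hmark2 n x]
        have hc : δ⁻¹ * (qe x * (c.P x₀ {ω | ω n = x} * δ)) = c.P x₀ {ω | ω n = x} * qe x := by
          rw [show qe x * (c.P x₀ {ω | ω n = x} * δ)
              = (c.P x₀ {ω | ω n = x} * qe x) * δ by ring]
          rw [mul_comm (c.P x₀ {ω | ω n = x} * qe x) δ, ← mul_assoc,
            ENNReal.inv_mul_cancel hδpos.ne' hδtop, one_mul]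
        calc c.P x₀ {ω | ω n = x} * qe x
            = δ⁻¹ * (qe x * (c.P x₀ {ω | ω n = x} * δ)) := hc.symm
          _ ≤ δ⁻¹ * (qe x * (c.P x₀ {ω | ω n = x} * c.P x G)) :=
              mul_le_mul_right (mul_le_mul_right (mul_le_mul_right hxδ _) _) _
    calc (∑' x : S, if x ∈ A then 0 else c.green x₀ x * ENNReal.ofReal (q x))
        ≤ ∑' x : S, δ⁻¹ * ∑' n, qe x * c.P x₀ (E2 n x) :=
          Summable.tsum_le_tsum hterm ENNReal.summable ENNReal.summable
      _ = δ⁻¹ * ∑' x : S, ∑' n, qe x * c.P x₀ (E2 n x) := ENNReal.tsum_mul_left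
      _ ≤ δ⁻¹ * (M:ℝ≥0∞) := mul_le_mul_right hRsum _
      _ < ⊤ := ENNReal.mul_lt_top (ENNReal.inv_lt_top.2 hδpos) (ENNReal.natCast_lt_top M)
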